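/- For s > 0 and |t| ≤ 1 and any integer ω ≥ 0, the modified Bessel function satisfies I_ω(2s·t) ≤ I_ω(2s) whenever t ∈ [0,1]; consequently the Fourier coefficients ĝ_ω of the extended k-SoS model g with Bessel kernel of parameter s satisfy |ĝ_ω| ≤ (Σ_{i,j}|R_iᵀR_j|) · Π_ℓ e^{−2s_ℓ} I_{|ω_ℓ|}(2s_ℓ), so that g belongs to the RKHS H_{2s} with kernel coefficients e^{−2s} I_{|ω|}(2s). -/

import Mathlib

open scoped BigOperators

/-- The modified Bessel function of the first kind. -/
noncomputable def besselI (n : ℕ) (z : ℝ) : ℝ :=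
  ∑' p : ℕ, (z / 2) ^ (2 * p + n) / ((p.factorial : ℝ) * ((p + n).factorial : ℝ))

/-!
All coefficients of the power series of `I_n` are nonnegative, so comparing term by term gives
`|I_n(a)| ≤ I_n(b)` whenever `|a| ≤ b`; in particular `|I_n(2s cos θ)| ≤ I_n(2s)`. The phases
`e^{-iπω(z + z')}` have modulus one, so the triangle inequality over `i, j` bounds `|ĝ_ω|` by
`Σ_{i,j} |RᵢᵀRⱼ|` times the product of these Bessel bounds.
-/

theorem summable_besselI_series (n : ℕ) (z : ℝ) :
    Summable fun p : ℕ => (z / 2) ^ (2 * p + n) / ((p.factorial : ℝ) * ((p + n).factorial : ℝ)) := by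
  refine Summable.of_norm_bounded
    ((Real.summable_pow_div_factorial ((|z| / 2) ^ 2)).mul_left ((|z| / 2) ^ n)) fun p => ?_
  have hfac : (1 : ℝ) ≤ (p + n).factorial := by exact_mod_cast (p + n).factorial_pos
  calc ‖(z / 2) ^ (2 * p + n) / ((p.factorial : ℝ) * (p + n).factorial)‖
      = (|z| / 2) ^ (2 * p + n) / ((p.factorial : ℝ) * (p + n).factorial) := by
        rw [Real.norm_eq_abs, abs_div, abs_of_pos (by positivity : (0 : ℝ) < _ * _), abs_pow,
          abs_div, abs_two]
    _ ≤ (|z| / 2) ^ (2 * p + n) / p.factorial :=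
        div_le_div_of_nonneg_left (by positivity) (by positivity)
          (le_mul_of_one_le_right (by positivity) hfac)
    _ = (|z| / 2) ^ n * (((|z| / 2) ^ 2) ^ p / p.factorial) := by rw [pow_add, pow_mul]; ring

theorem abs_besselI_le {n : ℕ} {a b : ℝ} (h : |a| ≤ b) : |besselI n a| ≤ besselI n b := by
  have hs := summable_besselI_series n a
  refine (norm_tsum_le_tsum_norm hs.norm).trans
    (hs.abs.tsum_le_tsum (fun p => ?_) (summable_besselI_series n b))
  have hab : |a / 2| ≤ b / 2 := by rw [abs_div, abs_two]; linarith
  rw [Real.norm_eq_abs, abs_div, abs_pow, abs_of_pos (by positivity : (0 : ℝ) < _ * _)]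
  gcongr

theorem abs_besselI_mul_le (n : ℕ) {b c : ℝ} (hb : 0 ≤ b) (hc : |c| ≤ 1) :
    |besselI n (b * c)| ≤ besselI n b :=
  abs_besselI_le (by rw [abs_mul, abs_of_nonneg hb]; exact mul_le_of_le_one_right hb hc)

theorem norm_exp_neg_pi_mul_I_mul (k : ℤ) (x : ℝ) :
    ‖Complex.exp (-(Real.pi * Complex.I * (k : ℂ) * (x : ℂ)))‖ = 1 := by
  rw [show -(Real.pi * Complex.I * (k : ℂ) * (x : ℂ)) = ((-(Real.pi * k * x) : ℝ) : ℂ) * Complex.I by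
    push_cast; ring]
  exact Complex.norm_exp_ofReal_mul_I _

theorem norm_sum_sum_mul_prod_le {ι κ : Type*} (s : Finset ι) (t : Finset κ)
    (a : ι → ι → ℝ) (f : ι → ι → κ → ℂ) (B : κ → ℝ) (hf : ∀ i j k, ‖f i j k‖ ≤ B k) :
    ‖∑ i ∈ s, ∑ j ∈ s, (a i j : ℂ) * ∏ k ∈ t, f i j k‖ ≤
      (∑ i ∈ s, ∑ j ∈ s, |a i j|) * ∏ k ∈ t, B k := by
  have hterm : ∀ i j, ‖(a i j : ℂ) * ∏ k ∈ t, f i j k‖ ≤ |a i j| * ∏ k ∈ t, B k := fun i j => by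
    rw [norm_mul, norm_prod, Complex.norm_real, Real.norm_eq_abs]
    exact mul_le_mul_of_nonneg_left
      (Finset.prod_le_prod (fun k _ => norm_nonneg _) fun k _ => hf i j k) (abs_nonneg _)
  simp only [Finset.sum_mul]
  exact (norm_sum_le _ _).trans <| Finset.sum_le_sum fun i _ =>
    (norm_sum_le _ _).trans <| Finset.sum_le_sum fun j _ => hterm i j

/-- `I_ω(2st) ≤ I_ω(2s)` for `t ∈ [0,1]`; consequently the Fourier coefficients
of the extended k-SoS model with Bessel kernel satisfy
`|ĝ_ω| ≤ (Σ_{i,j}|RᵢᵀRⱼ|) Π_ℓ e^{-2s_ℓ} I_{|ω_ℓ|}(2s_ℓ)`, so `g` belongs to `H_{2s}`. -/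
theorem stmt18 {d r m : ℕ} (svec : Fin d → ℝ) (hs : ∀ ℓ, 0 < svec ℓ)
    (R : Fin m → Fin r → ℝ) (z : Fin m → Fin d → ℝ) (ω : Fin d → ℤ) :
    (∀ s : ℝ, 0 < s → ∀ t ∈ Set.Icc (0 : ℝ) 1, ∀ w : ℕ,
      besselI w (2 * s * t) ≤ besselI w (2 * s)) ∧
    ‖∑ i : Fin m, ∑ j : Fin m, ((∑ k : Fin r, R i k * R j k : ℝ) : ℂ) *
        ∏ ℓ : Fin d,
          (((Real.exp (-(2 * svec ℓ)) *
            besselI (ω ℓ).natAbs (2 * svec ℓ * Real.cos (Real.pi * (z i ℓ - z j ℓ))) : ℝ) : ℂ) *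
            Complex.exp (-(Real.pi * Complex.I * ((ω ℓ : ℤ) : ℂ) * ((z i ℓ + z j ℓ : ℝ) : ℂ))))‖ ≤
      (∑ i : Fin m, ∑ j : Fin m, |∑ k : Fin r, R i k * R j k|) *
        ∏ ℓ : Fin d, Real.exp (-(2 * svec ℓ)) * besselI (ω ℓ).natAbs (2 * svec ℓ) := by
  refine ⟨fun s hs_pos t ht w => ?_, norm_sum_sum_mul_prod_le _ _ _ _ _ fun i j ℓ => ?_⟩
  · exact (le_abs_self _).trans
      (abs_besselI_mul_le w (by positivity) (by rw [abs_of_nonneg ht.1]; exact ht.2))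
  · rw [norm_mul, norm_exp_neg_pi_mul_I_mul, mul_one, Complex.norm_real, Real.norm_eq_abs, abs_mul,
      abs_of_pos (Real.exp_pos _)]
    exact mul_le_mul_of_nonneg_left
      (abs_besselI_mul_le _ (by linarith [hs ℓ]) (Real.abs_cos_le_one _)) (Real.exp_pos _).le
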